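/- Let R ⊆ ℤ² be finite and nonempty, let m : R → [0,∞), and let τ : ∂°R → ℝ satisfy |τ_y| ≤ π/5 for all y ∈ ∂°R. Then every maximizer ν of θ ↦ −K_R(θ|τ) over the set {θ : R → ℝ : |θ_x| ≤ π/2 for all x ∈ R} satisfies the Euler–Lagrange equations: for every x ∈ R, Σ_{y∈R, y∼x} sin(ν_x − ν_y) + Σ_{y∈∂°R, y∼x} sin(ν_x − τ_y) + (m_x/2) sin(ν_x) cos(ν_x) = 0. -/

import Mathlib

open Finset

/-- Nearest neighbours of a site of `ℤ²` (Euclidean distance 1). -/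
def nbrs (x : ℤ × ℤ) : Finset (ℤ × ℤ) :=
  {(x.1 + 1, x.2), (x.1 - 1, x.2), (x.1, x.2 + 1), (x.1, x.2 - 1)}

/-- Outer boundary `∂°R = {x ∉ R : dist(x,R) ≤ 1}`. -/
def outerBdry (R : Finset (ℤ × ℤ)) : Finset (ℤ × ℤ) := (R.biUnion nbrs) \ R

/-- `−K_R(θ|τ)`: sum over unordered nearest-neighbour pairs inside `R`
(written as half the sum over ordered pairs), plus the boundary interaction,
plus the mass term `(1/4) Σ m_x cos² θ_x`. -/
noncomputable def negK (R : Finset (ℤ × ℤ)) (m τ θ : ℤ × ℤ → ℝ) : ℝ :=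
  (1 / 2) * ∑ x ∈ R, ∑ y ∈ R ∩ nbrs x, (Real.cos (θ x - θ y) - 1)
    + ∑ x ∈ R, ∑ y ∈ outerBdry R ∩ nbrs x, (Real.cos (θ x - τ y) - 1)
    + (1 / 4) * ∑ x ∈ R, m x * Real.cos (θ x) ^ 2

/-!
Write `E_x(ν)` for the Euler–Lagrange expression at `x`. Along the coordinate line
`t ↦ update ν x t`, `−K` has derivative `−E_x(ν)` at `t = ν x` (each bond at `x` is counted twice
in the ordered-pair sum, cancelling the factor `1/2`). If `ν x < π/2` the direction of increasing `t`
is feasible, so maximality gives `E_x(ν) ≥ 0`; if `ν x = π/2` then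
`E_x(ν) = Σ cos ν_y + Σ cos τ_y ≥ 0` since all angles lie in `[−π/2, π/2]`. The reflection
`(θ, τ) ↦ (−θ, −τ)` preserves `−K` and negates `E_x`, which gives `E_x(ν) ≤ 0`.
-/

open Real

lemma mem_nbrs_comm {x y : ℤ × ℤ} : y ∈ nbrs x ↔ x ∈ nbrs y := by
  simp only [nbrs, mem_insert, mem_singleton, Prod.ext_iff]
  omega

lemma filter_mem_nbrs (R : Finset (ℤ × ℤ)) (x : ℤ × ℤ) :
    R.filter (fun u => x ∈ nbrs u) = R ∩ nbrs x := by
  ext u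
  simp [mem_nbrs_comm (x := u)]

lemma sum_sum_nbrs_mul_ite_sub {R : Finset (ℤ × ℤ)} {x : ℤ × ℤ} (hx : x ∈ R)
    (g : ℤ × ℤ → ℤ × ℤ → ℝ) :
    ∑ u ∈ R, ∑ y ∈ R ∩ nbrs u, g u y * ((if u = x then 1 else 0) - if y = x then 1 else 0)
      = ∑ y ∈ R ∩ nbrs x, (g x y - g y x) := by
  simp only [mul_sub, sum_sub_distrib, mul_ite, mul_one, mul_zero, sum_ite_eq', sum_ite_irrel,
    sum_const_zero, mem_inter, hx, true_and, if_true]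
  rw [← sum_filter, filter_mem_nbrs]

lemma hasDerivAt_update_apply {α : Type*} [DecidableEq α] (ν : α → ℝ) (x u : α) (t : ℝ) :
    HasDerivAt (fun s => Function.update ν x s u) (if u = x then 1 else 0) t := by
  by_cases h : u = x
  · subst h
    simpa using hasDerivAt_id' t
  · simpa [Function.update_of_ne h, h] using hasDerivAt_const t (ν u)

noncomputable def eulerLagrange (R : Finset (ℤ × ℤ)) (m τ ν : ℤ × ℤ → ℝ) (x : ℤ × ℤ) : ℝ :=
  (∑ y ∈ R ∩ nbrs x, sin (ν x - ν y))
    + (∑ y ∈ outerBdry R ∩ nbrs x, sin (ν x - τ y))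
    + (m x / 2) * sin (ν x) * cos (ν x)

theorem hasDerivAt_negK_update {R : Finset (ℤ × ℤ)} {x : ℤ × ℤ} (hx : x ∈ R)
    (m τ ν : ℤ × ℤ → ℝ) :
    HasDerivAt (fun t => negK R m τ (Function.update ν x t)) (-eulerLagrange R m τ ν x) (ν x) := by
  have hθ u := hasDerivAt_update_apply ν x u (ν x)
  unfold negK
  refine HasDerivAt.congr_deriv ((((HasDerivAt.fun_sum fun u _ => HasDerivAt.fun_sum fun y _ =>
      (((hθ u).sub (hθ y)).cos.sub_const 1)).const_mul (1 / 2 : ℝ)).add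
    (HasDerivAt.fun_sum fun u _ => HasDerivAt.fun_sum fun y _ =>
      ((hθ u).sub_const (τ y)).cos.sub_const 1)).add
    ((HasDerivAt.fun_sum fun u _ => ((hθ u).cos.pow 2).const_mul (m u)).const_mul (1 / 4 : ℝ))) ?_
  simp only [Pi.sub_apply, Function.update_eq_self]
  rw [sum_sum_nbrs_mul_ite_sub hx]
  simp only [mul_ite, mul_one, mul_zero, sum_ite_eq', sum_ite_irrel, sum_const_zero, hx, if_true,
    ← neg_sub (ν x), Real.sin_neg, neg_neg, eulerLagrange, sum_sub_distrib, sum_neg_distrib]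
  push_cast
  ring

theorem HasDerivAt.nonpos_of_isMaxOn_Icc {f : ℝ → ℝ} {f' a b c : ℝ} (hf : HasDerivAt f f' c)
    (hmax : IsMaxOn f (Set.Icc a b) c) (hac : a ≤ c) (hcb : c < b) : f' ≤ 0 := by
  have hseg : segment ℝ c b ⊆ Set.Icc a b :=
    (convex_Icc a b).segment_subset ⟨hac, hcb.le⟩ ⟨hac.trans hcb.le, le_rfl⟩
  have h := hmax.localize.hasFDerivWithinAt_nonpos hf.hasFDerivAt.hasFDerivWithinAt
    (sub_mem_posTangentConeAt_of_segment_subset hseg)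
  simp only [ContinuousLinearMap.toSpanSingleton_apply, smul_eq_mul] at h
  exact nonpos_of_mul_nonpos_right h (sub_pos.mpr hcb)

lemma negK_neg (R : Finset (ℤ × ℤ)) (m τ θ : ℤ × ℤ → ℝ) : negK R m (-τ) (-θ) = negK R m τ θ := by
  have hcos (a b : ℝ) : cos (-a - -b) = cos (a - b) := by
    rw [← Real.cos_neg]; ring_nf
  simp only [negK, Pi.neg_apply, hcos, Real.cos_neg]

lemma eulerLagrange_neg (R : Finset (ℤ × ℤ)) (m τ ν : ℤ × ℤ → ℝ) (x : ℤ × ℤ) :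
    eulerLagrange R m (-τ) (-ν) x = -eulerLagrange R m τ ν x := by
  simp only [eulerLagrange, Pi.neg_apply, neg_sub_neg, Real.sin_neg, Real.cos_neg,
    ← neg_sub (ν x), sum_neg_distrib]
  ring

lemma isMaxOn_Icc_update {α : Type*} [DecidableEq α] {F : (α → ℝ) → ℝ} {R : Finset α} {c : ℝ}
    {ν : α → ℝ} (hν : ∀ y ∈ R, |ν y| ≤ c)
    (hmax : ∀ θ : α → ℝ, (∀ y ∈ R, |θ y| ≤ c) → F θ ≤ F ν) (x : α) :
    IsMaxOn (fun t => F (Function.update ν x t)) (Set.Icc (-c) c) (ν x) := by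
  intro t ht
  change F _ ≤ F _
  rw [Function.update_eq_self]
  refine hmax _ fun y hy => ?_
  rcases eq_or_ne y x with rfl | hyx
  · rw [Function.update_self]
    exact abs_le.mpr ht
  · rw [Function.update_of_ne hyx]
    exact hν y hy

lemma eulerLagrange_pi_div_two_nonneg {R : Finset (ℤ × ℤ)} {m τ ν : ℤ × ℤ → ℝ} {x : ℤ × ℤ}
    (hτ : ∀ y ∈ outerBdry R, |τ y| ≤ π / 2) (hν : ∀ y ∈ R, |ν y| ≤ π / 2) (hνx : ν x = π / 2) :
    0 ≤ eulerLagrange R m τ ν x := by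
  have hcos {a : ℝ} (ha : |a| ≤ π / 2) : 0 ≤ sin (π / 2 - a) := by
    rw [Real.sin_pi_div_two_sub]
    exact Real.cos_nonneg_of_mem_Icc (abs_le.mp ha)
  rw [eulerLagrange, hνx, Real.cos_pi_div_two, mul_zero, add_zero]
  exact add_nonneg (sum_nonneg fun y hy => hcos (hν y (mem_inter.mp hy).1))
    (sum_nonneg fun y hy => hcos (hτ y (mem_inter.mp hy).1))

theorem eulerLagrange_nonneg_of_isMaximizer {R : Finset (ℤ × ℤ)} {m τ ν : ℤ × ℤ → ℝ}
    {x : ℤ × ℤ} (hx : x ∈ R) (hτ : ∀ y ∈ outerBdry R, |τ y| ≤ π / 2)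
    (hν : ∀ y ∈ R, |ν y| ≤ π / 2)
    (hmax : ∀ θ : ℤ × ℤ → ℝ, (∀ y ∈ R, |θ y| ≤ π / 2) → negK R m τ θ ≤ negK R m τ ν) :
    0 ≤ eulerLagrange R m τ ν x := by
  obtain ⟨hlow, hup⟩ := abs_le.mp (hν x hx)
  rcases hup.lt_or_eq with hlt | heq
  · have := (hasDerivAt_negK_update hx m τ ν).nonpos_of_isMaxOn_Icc
      (isMaxOn_Icc_update hν hmax x) hlow hlt
    linarith
  · exact eulerLagrange_pi_div_two_nonneg hτ hν heq

theorem stmt1_general (R : Finset (ℤ × ℤ))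
    (m : ℤ × ℤ → ℝ)
    (τ : ℤ × ℤ → ℝ) (hτ : ∀ y ∈ outerBdry R, |τ y| ≤ Real.pi / 5)
    (ν : ℤ × ℤ → ℝ) (hν : ∀ x ∈ R, |ν x| ≤ Real.pi / 2)
    (hmax : ∀ θ : ℤ × ℤ → ℝ, (∀ x ∈ R, |θ x| ≤ Real.pi / 2) →
      negK R m τ θ ≤ negK R m τ ν) :
    ∀ x ∈ R,
      (∑ y ∈ R ∩ nbrs x, Real.sin (ν x - ν y))
        + (∑ y ∈ outerBdry R ∩ nbrs x, Real.sin (ν x - τ y))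
        + (m x / 2) * Real.sin (ν x) * Real.cos (ν x) = 0 := by
  intro x hx
  change eulerLagrange R m τ ν x = 0
  have hτ' : ∀ y ∈ outerBdry R, |τ y| ≤ π / 2 := fun y hy => (hτ y hy).trans (by linarith [pi_pos])
  have hnonneg := eulerLagrange_nonneg_of_isMaximizer hx hτ' hν hmax
  have hnonpos := eulerLagrange_nonneg_of_isMaximizer (m := m) (τ := -τ) (ν := -ν) hx
    (by simpa only [Pi.neg_apply, abs_neg] using hτ') (by simpa only [Pi.neg_apply, abs_neg] using hν)
    fun θ hθ => by
      rw [← neg_neg θ, negK_neg, negK_neg]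
      exact hmax (-θ) (by simpa only [Pi.neg_apply, abs_neg] using hθ)
  rw [eulerLagrange_neg] at hnonpos
  exact le_antisymm (neg_nonneg.mp hnonpos) hnonneg

/-- Every maximizer of `−K_R(·|τ)` over `{θ : |θ_x| ≤ π/2 on R}` satisfies the
Euler–Lagrange equations. -/
theorem stmt1 (R : Finset (ℤ × ℤ)) (hR : R.Nonempty)
    (m : ℤ × ℤ → ℝ) (hm : ∀ x ∈ R, 0 ≤ m x)
    (τ : ℤ × ℤ → ℝ) (hτ : ∀ y ∈ outerBdry R, |τ y| ≤ Real.pi / 5)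
    (ν : ℤ × ℤ → ℝ) (hν : ∀ x ∈ R, |ν x| ≤ Real.pi / 2)
    (hmax : ∀ θ : ℤ × ℤ → ℝ, (∀ x ∈ R, |θ x| ≤ Real.pi / 2) →
      negK R m τ θ ≤ negK R m τ ν) :
    ∀ x ∈ R,
      (∑ y ∈ R ∩ nbrs x, Real.sin (ν x - ν y))
        + (∑ y ∈ outerBdry R ∩ nbrs x, Real.sin (ν x - τ y))
        + (m x / 2) * Real.sin (ν x) * Real.cos (ν x) = 0 :=
  stmt1_general R m τ hτ ν hν hmax
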